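/- Completeness of satisfaction classes (Lemma 2, satisfaction part): Let φ be an STL formula with a classification criterion fixed as in the context. For every signal w with w ⊨ φ, there exists a satisfaction class ψ ∈ Cls⁺(φ) such that w ∈ S(ψ), i.e. there exists a valuation θ ∈ Θ with w ⊨ ψ(θ). -/

import Mathlib

namespace STLClass

abbrev Signal (N : ℕ) := ℝ → Fin N → ℝ

def shift {N : ℕ} (w : Signal N) (t : ℝ) : Signal N := fun t' => w (t + t')

inductive STL (N : ℕ) : Type where
  | atom (f : (Fin N → ℝ) → ℝ)
  | falsum
  | not (φ : STL N)
  | and (φ₁ φ₂ : STL N)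
  | or (φ₁ φ₂ : STL N)
  | always (a b : ℝ) (φ : STL N)
  | event (a b : ℝ) (φ : STL N)
  | untl (a b : ℝ) (φ₁ φ₂ : STL N)

def STL.top {N : ℕ} : STL N := .not .falsum

noncomputable def robust {N : ℕ} : STL N → Signal N → EReal
  | .atom f, w => ((f (w 0) : ℝ) : EReal)
  | .falsum, _ => ⊥
  | .not φ, w => - robust φ w
  | .and φ₁ φ₂, w => min (robust φ₁ w) (robust φ₂ w)
  | .or φ₁ φ₂, w => max (robust φ₁ w) (robust φ₂ w)
  | .always a b φ, w => ⨅ t : Set.Icc a b, robust φ (shift w t.1)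
  | .event a b φ, w => ⨆ t : Set.Icc a b, robust φ (shift w t.1)
  | .untl a b φ₁ φ₂, w =>
      ⨆ t : Set.Icc a b,
        min (robust φ₂ (shift w t.1)) (⨅ t' : Set.Ico (0 : ℝ) t.1, robust φ₁ (shift w t'.1))

def Sat {N : ℕ} (w : Signal N) (φ : STL N) : Prop := 0 < robust φ w

def Vio {N : ℕ} (w : Signal N) (φ : STL N) : Prop := robust φ w < 0

/-- An STL formula together with a classification criterion: each temporal operator is
annotated with a natural number `k`, meaning that its interval is split into `k + 1`
consecutive segments (so the "positive integer" of the criterion is `k + 1`). -/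
inductive AForm (N : ℕ) : Type where
  | atom (f : (Fin N → ℝ) → ℝ)
  | falsum
  | not (φ : AForm N)
  | and (φ₁ φ₂ : AForm N)
  | or (φ₁ φ₂ : AForm N)
  | always (a b : ℝ) (k : ℕ) (φ : AForm N)
  | event (a b : ℝ) (k : ℕ) (φ : AForm N)
  | untl (a b : ℝ) (k : ℕ) (φ₁ φ₂ : AForm N)

/-- The underlying STL formula of an annotated formula. -/
def AForm.toSTL {N : ℕ} : AForm N → STL N
  | .atom f => .atom f
  | .falsum => .falsum
  | .not φ => .not φ.toSTL
  | .and φ₁ φ₂ => .and φ₁.toSTL φ₂.toSTL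
  | .or φ₁ φ₂ => .or φ₁.toSTL φ₂.toSTL
  | .always a b _ φ => .always a b φ.toSTL
  | .event a b _ φ => .event a b φ.toSTL
  | .untl a b _ φ₁ φ₂ => .untl a b φ₁.toSTL φ₂.toSTL

/-- Well-formedness: every temporal interval `[a, b]` satisfies `0 ≤ a < b`. -/
def AForm.WF {N : ℕ} : AForm N → Prop
  | .atom _ => True
  | .falsum => True
  | .not φ => φ.WF
  | .and φ₁ φ₂ => φ₁.WF ∧ φ₂.WF
  | .or φ₁ φ₂ => φ₁.WF ∧ φ₂.WF
  | .always a b _ φ => 0 ≤ a ∧ a < b ∧ φ.WF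
  | .event a b _ φ => 0 ≤ a ∧ a < b ∧ φ.WF
  | .untl a b _ φ₁ φ₂ => 0 ≤ a ∧ a < b ∧ φ₁.WF ∧ φ₂.WF

/-- A split of the interval `[a, b]` into `n` consecutive nonsingular segments:
`n + 1` strictly increasing points starting at `a` and ending at `b`.  The segment
`i` is `[pts i.castSucc, pts i.succ]`. -/
structure Split (a b : ℝ) (n : ℕ) : Type where
  pts : Fin (n + 1) → ℝ
  strictMono : StrictMono pts
  first : pts 0 = a
  last : pts (Fin.last n) = b

/-- The valuation space `Θ` of an annotated formula: a choice of admissible breakpoints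
for each temporal subformula. -/
def Val {N : ℕ} : AForm N → Type
  | .atom _ => PUnit
  | .falsum => PUnit
  | .not φ => Val φ
  | .and φ₁ φ₂ => Val φ₁ × Val φ₂
  | .or φ₁ φ₂ => Val φ₁ × Val φ₂
  | .always a b k φ => Split a b (k + 1) × Val φ
  | .event a b k φ => Split a b (k + 1) × Val φ
  | .untl a b k φ₁ φ₂ => Split a b (k + 1) × Val φ₁ × Val φ₂

/-- Finite conjunction of a list of STL formulas (empty conjunction is `⊤`). -/
def listAnd {N : ℕ} : List (STL N) → STL N
  | [] => STL.top
  | [φ] => φ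
  | φ :: φ' :: rest => .and φ (listAnd (φ' :: rest))

/-- Finite disjunction of a list of STL formulas (empty disjunction is `⊥`). -/
def listOr {N : ℕ} : List (STL N) → STL N
  | [] => .falsum
  | [φ] => φ
  | φ :: φ' :: rest => .or φ (listOr (φ' :: rest))

/-- `⋀_{i} f i`. -/
def iAnd {N : ℕ} {k : ℕ} (f : Fin k → STL N) : STL N := listAnd (List.ofFn f)

/-- `⋁_{i} f i`. -/
def iOr {N : ℕ} {k : ℕ} (f : Fin k → STL N) : STL N := listOr (List.ofFn f)

/-- `Cls true φ` is the set `Cls⁺(φ)` of satisfaction classes and `Cls false φ` is the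
set `Cls⁻(φ)` of violation classes; a class is represented by its instantiation map
`Θ → STL N` sending a valuation `θ` to the STL formula `ψ(θ)`. -/
def Cls {N : ℕ} : Bool → (φ : AForm N) → Set (Val φ → STL N)
  | b, .atom f =>
      {fun _ => if b then STL.falsum else STL.top, fun _ => STL.atom f}
  | _, .falsum => {fun _ => STL.falsum}
  | b, .not φ =>
      {c | ∃ ψ ∈ Cls (!b) φ, c = fun θ => STL.not (ψ θ)}
  | b, .and φ₁ φ₂ =>
      {c | ∃ ψ₁ ∈ Cls b φ₁, ∃ ψ₂ ∈ Cls b φ₂,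
        c = fun θ => STL.and (ψ₁ θ.1) (ψ₂ θ.2)}
  | b, .or φ₁ φ₂ =>
      {c | ∃ ψ₁ ∈ Cls b φ₁, ∃ ψ₂ ∈ Cls b φ₂,
        c = fun θ => STL.or (ψ₁ θ.1) (ψ₂ θ.2)}
  | b, .always _ _ k φ =>
      {c | ∃ ψ : Fin (k + 1) → Val φ → STL N, (∀ i, ψ i ∈ Cls b φ) ∧
        c = fun θ => iAnd fun i : Fin (k + 1) =>
          STL.always (θ.1.pts i.castSucc) (θ.1.pts i.succ) (ψ i θ.2)}
  | b, .event _ _ k φ =>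
      {c | ∃ ψ : Fin (k + 1) → Val φ → STL N, (∀ i, ψ i ∈ Cls b φ) ∧
        c = fun θ => iOr fun i : Fin (k + 1) =>
          STL.event (θ.1.pts i.castSucc) (θ.1.pts i.succ) (ψ i θ.2)}
  | b, .untl _ _ k φ₁ φ₂ =>
      {c | ∃ ψ : Fin (k + 1) → Val φ₁ → STL N, ∃ σ : Fin (k + 1) → Val φ₂ → STL N,
           ∃ ξ : Fin (k + 1) → Fin (k + 1) → Val φ₁ → STL N,
        (∀ i, ψ i ∈ Cls b φ₁) ∧ (∀ i, σ i ∈ Cls b φ₂) ∧ (∀ i j, ξ i j ∈ Cls b φ₁) ∧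
        c = fun θ => iOr fun i : Fin (k + 1) =>
          STL.and
            (STL.untl (θ.1.pts i.castSucc) (θ.1.pts i.succ) (ψ i θ.2.1) (σ i θ.2.2))
            (iAnd fun j : Fin (i : ℕ) =>
              STL.always (θ.1.pts (j.castLE i.isLt.le).castSucc)
                (θ.1.pts (j.castLE i.isLt.le).succ) (ξ i (j.castLE i.isLt.le) θ.2.1))}

/-- The satisfiable set `S(ψ)` of a class. -/
def SatSet {N : ℕ} (φ : AForm N) (ψ : Val φ → STL N) : Set (Signal N) :=
  {w | ∃ θ : Val φ, Sat w (ψ θ)}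

/-- The falsifiable set `V(ψ)` of a class. -/
def VioSet {N : ℕ} (φ : AForm N) (ψ : Val φ → STL N) : Set (Signal N) :=
  {w | ∃ θ : Val φ, Vio w (ψ θ)}

/-! Every formula is one of its own satisfaction classes: distributing each temporal operator
over the segments of an arbitrary split, with the formula's own subformulas on every segment,
does not change the robustness. For `□` and `◇` this holds because the segments cover `[a, b]`;
for `U`, a witness time `t` taken in the first segment containing it has all earlier segments
inside `[0, t)`, where `φ₁` already holds. Uniform splits show that valuations exist. -/

theorem robust_top {N : ℕ} (w : Signal N) : robust STL.top w = ⊤ := by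
  simp [STL.top, robust]

theorem robust_listAnd {N : ℕ} (l : List (STL N)) (w : Signal N) :
    robust (listAnd l) w = ⨅ φ ∈ l, robust φ w := by
  fun_induction listAnd l with
  | case1 => simp [robust_top]
  | case2 φ => simp
  | case3 φ φ' rest ih => simp [robust, ih, iInf_or, iInf_inf_eq]

theorem robust_listOr {N : ℕ} (l : List (STL N)) (w : Signal N) :
    robust (listOr l) w = ⨆ φ ∈ l, robust φ w := by
  fun_induction listOr l with
  | case1 => simp [robust]
  | case2 φ => simp
  | case3 φ φ' rest ih => simp [robust, ih, iSup_or, iSup_sup_eq]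

theorem robust_iAnd {N k : ℕ} (f : Fin k → STL N) (w : Signal N) :
    robust (iAnd f) w = ⨅ i, robust (f i) w := by
  rw [iAnd, robust_listAnd]
  simp only [List.mem_ofFn]
  exact iInf_range

theorem robust_iOr {N k : ℕ} (f : Fin k → STL N) (w : Signal N) :
    robust (iOr f) w = ⨆ i, robust (f i) w := by
  rw [iOr, robust_listOr]
  simp only [List.mem_ofFn]
  exact iSup_range

theorem exists_mem_segment_forall_lt {n : ℕ} (p : Fin (n + 2) → ℝ) {t : ℝ} (h₀ : p 0 ≤ t)
    (hlast : t ≤ p (Fin.last _)) :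
    ∃ i : Fin (n + 1), t ∈ Set.Icc (p i.castSucc) (p i.succ) ∧ ∀ j < i, p j.succ < t := by
  induction n with
  | zero => exact ⟨0, ⟨h₀, hlast⟩, fun j hj => absurd hj (Fin.not_lt_zero j)⟩
  | succ n ih =>
    by_cases h₁ : t ≤ p 1
    · exact ⟨0, ⟨h₀, h₁⟩, fun j hj => absurd hj (Fin.not_lt_zero j)⟩
    · push Not at h₁
      obtain ⟨i, hti, hbefore⟩ := ih (fun j => p j.succ) h₁.le hlast
      refine ⟨i.succ, hti, fun j hj => ?_⟩
      cases j using Fin.cases with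
      | zero => exact h₁
      | succ j => exact hbefore j (Fin.succ_lt_succ_iff.mp hj)

namespace Split

variable {a b : ℝ} {n : ℕ}

noncomputable def uniform (h : a < b) (n : ℕ) : Split a b (n + 1) where
  pts i := a + i * ((b - a) / (n + 1))
  strictMono i j hij := by
    have : 0 < (b - a) / (n + 1) := div_pos (sub_pos.2 h) n.cast_add_one_pos
    dsimp only
    gcongr
    exact_mod_cast hij
  first := by simp
  last := by
    simp only [Fin.val_last, Nat.cast_add, Nat.cast_one]
    field_simp
    ring

theorem segment_subset (s : Split a b n) (i : Fin n) :
    Set.Icc (s.pts i.castSucc) (s.pts i.succ) ⊆ Set.Icc a b :=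
  Set.Icc_subset_Icc (s.first.symm.trans_le (s.strictMono.monotone (Fin.zero_le _)))
    ((s.strictMono.monotone (Fin.le_last _)).trans_eq s.last)

theorem exists_first_segment (s : Split a b (n + 1)) {t : ℝ} (ht : t ∈ Set.Icc a b) :
    ∃ i : Fin (n + 1), t ∈ Set.Icc (s.pts i.castSucc) (s.pts i.succ) ∧
      ∀ j < i, s.pts j.succ < t :=
  exists_mem_segment_forall_lt s.pts (s.first.trans_le ht.1) (ht.2.trans_eq s.last.symm)

theorem iUnion_segment (s : Split a b (n + 1)) :
    ⋃ i : Fin (n + 1), Set.Icc (s.pts i.castSucc) (s.pts i.succ) = Set.Icc a b :=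
  Set.Subset.antisymm (Set.iUnion_subset s.segment_subset) fun _ ht =>
    Set.mem_iUnion.2 ((s.exists_first_segment ht).imp fun _ => And.left)

variable {α : Type*}

theorem iInf_Icc_eq [CompleteLattice α] (s : Split a b (n + 1)) (f : ℝ → α) :
    ⨅ t : Set.Icc a b, f t =
      ⨅ i : Fin (n + 1), ⨅ t : Set.Icc (s.pts i.castSucc) (s.pts i.succ), f t := by
  simp only [iInf_subtype'']
  rw [← s.iUnion_segment, iInf_iUnion]

theorem iSup_Icc_eq [CompleteLattice α] (s : Split a b (n + 1)) (f : ℝ → α) :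
    ⨆ t : Set.Icc a b, f t =
      ⨆ i : Fin (n + 1), ⨆ t : Set.Icc (s.pts i.castSucc) (s.pts i.succ), f t :=
  s.iInf_Icc_eq (α := αᵒᵈ) f

theorem iSup_untl_eq [CompleteLinearOrder α] (s : Split a b (n + 1)) (ha : 0 ≤ a)
    (f g : ℝ → α) :
    ⨆ i : Fin (n + 1),
      min (⨆ t : Set.Icc (s.pts i.castSucc) (s.pts i.succ),
            min (g t) (⨅ t' : Set.Ico (0 : ℝ) t, f t'))
        (⨅ j : Fin i, ⨅ t : Set.Icc (s.pts (j.castLE i.isLt.le).castSucc)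
            (s.pts (j.castLE i.isLt.le).succ), f t) =
      ⨆ t : Set.Icc a b, min (g t) (⨅ t' : Set.Ico (0 : ℝ) t, f t') := by
  apply le_antisymm
  · refine iSup_le fun i => (min_le_left _ _).trans (iSup_le fun t => ?_)
    exact le_iSup_of_le ⟨t, s.segment_subset i t.2⟩ le_rfl
  · refine iSup_le fun t => ?_
    obtain ⟨i, hti, hbefore⟩ := s.exists_first_segment t.2
    refine le_iSup_of_le i (le_min (le_iSup_of_le ⟨t, hti⟩ le_rfl) ?_)
    refine (min_le_right _ _).trans (le_iInf₂ fun j t' => iInf_le_of_le ⟨t', ?_, ?_⟩ le_rfl)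
    · exact ha.trans (s.segment_subset _ t'.2).1
    · exact t'.2.2.trans_lt (hbefore _ (Fin.lt_def.2 j.isLt))

end Split

namespace AForm

variable {N : ℕ}

theorem WF.nonempty_val {φ : AForm N} (hφ : φ.WF) : Nonempty (Val φ) := by
  induction φ with
  | atom | falsum => exact ⟨PUnit.unit⟩
  | not φ ih => exact ih hφ
  | and φ₁ φ₂ ih₁ ih₂ | or φ₁ φ₂ ih₁ ih₂ => exact ⟨((ih₁ hφ.1).some, (ih₂ hφ.2).some)⟩
  | always a b k φ ih | event a b k φ ih =>
    exact ⟨(Split.uniform hφ.2.1 k, (ih hφ.2.2).some)⟩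
  | untl a b k φ₁ φ₂ ih₁ ih₂ =>
    exact ⟨(Split.uniform hφ.2.1 k, (ih₁ hφ.2.2.1).some, (ih₂ hφ.2.2.2).some)⟩

def canonicalClass : (φ : AForm N) → Val φ → STL N
  | .atom f => fun _ => .atom f
  | .falsum => fun _ => .falsum
  | .not φ => fun θ => .not (canonicalClass φ θ)
  | .and φ₁ φ₂ => fun θ => .and (canonicalClass φ₁ θ.1) (canonicalClass φ₂ θ.2)
  | .or φ₁ φ₂ => fun θ => .or (canonicalClass φ₁ θ.1) (canonicalClass φ₂ θ.2)
  | .always _ _ k φ => fun θ => iAnd fun i : Fin (k + 1) =>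
      .always (θ.1.pts i.castSucc) (θ.1.pts i.succ) (canonicalClass φ θ.2)
  | .event _ _ k φ => fun θ => iOr fun i : Fin (k + 1) =>
      .event (θ.1.pts i.castSucc) (θ.1.pts i.succ) (canonicalClass φ θ.2)
  | .untl _ _ k φ₁ φ₂ => fun θ => iOr fun i : Fin (k + 1) =>
      .and
        (.untl (θ.1.pts i.castSucc) (θ.1.pts i.succ) (canonicalClass φ₁ θ.2.1)
          (canonicalClass φ₂ θ.2.2))
        (iAnd fun j : Fin i =>
          .always (θ.1.pts (j.castLE i.isLt.le).castSucc)
            (θ.1.pts (j.castLE i.isLt.le).succ) (canonicalClass φ₁ θ.2.1))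

theorem canonicalClass_mem : ∀ (b : Bool) (φ : AForm N), canonicalClass φ ∈ Cls b φ
  | _, .atom _ => Or.inr rfl
  | _, .falsum => rfl
  | b, .not φ => ⟨_, canonicalClass_mem (!b) φ, rfl⟩
  | b, .and φ₁ φ₂ | b, .or φ₁ φ₂ =>
    ⟨_, canonicalClass_mem b φ₁, _, canonicalClass_mem b φ₂, rfl⟩
  | b, .always _ _ _ φ | b, .event _ _ _ φ =>
    ⟨fun _ => canonicalClass φ, fun _ => canonicalClass_mem b φ, rfl⟩
  | b, .untl _ _ _ φ₁ φ₂ =>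
    ⟨fun _ => canonicalClass φ₁, fun _ => canonicalClass φ₂, fun _ _ => canonicalClass φ₁,
      fun _ => canonicalClass_mem b φ₁, fun _ => canonicalClass_mem b φ₂,
      fun _ _ => canonicalClass_mem b φ₁, rfl⟩

theorem robust_canonicalClass {φ : AForm N} (hφ : φ.WF) (θ : Val φ) (w : Signal N) :
    robust (canonicalClass φ θ) w = robust φ.toSTL w := by
  induction φ generalizing w with
  | atom | falsum => rfl
  | not φ ih => simp only [canonicalClass, toSTL, robust, ih hφ θ]
  | and φ₁ φ₂ ih₁ ih₂ | or φ₁ φ₂ ih₁ ih₂ =>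
    simp only [canonicalClass, toSTL, robust, ih₁ hφ.1 θ.1, ih₂ hφ.2 θ.2]
  | always a b k φ ih =>
    obtain ⟨s, θ⟩ := θ
    simp only [canonicalClass, toSTL, robust_iAnd, robust, ih hφ.2.2 θ]
    exact (s.iInf_Icc_eq fun t => robust φ.toSTL (shift w t)).symm
  | event a b k φ ih =>
    obtain ⟨s, θ⟩ := θ
    simp only [canonicalClass, toSTL, robust_iOr, robust, ih hφ.2.2 θ]
    exact (s.iSup_Icc_eq fun t => robust φ.toSTL (shift w t)).symm
  | untl a b k φ₁ φ₂ ih₁ ih₂ =>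
    obtain ⟨s, θ₁, θ₂⟩ := θ
    simp only [canonicalClass, toSTL, robust_iOr, robust_iAnd, robust, ih₁ hφ.2.2.1 θ₁,
      ih₂ hφ.2.2.2 θ₂]
    exact s.iSup_untl_eq hφ.1 (fun t => robust φ₁.toSTL (shift w t))
      (fun t => robust φ₂.toSTL (shift w t))

end AForm

/-- Completeness of satisfaction classes (Lemma 2, satisfaction part): if `w ⊨ φ`,
then there is a satisfaction class `ψ ∈ Cls⁺(φ)` with `w ∈ S(ψ)`, i.e. `w ⊨ ψ(θ)`
for some valuation `θ ∈ Θ`. -/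
theorem sat_class_complete {N : ℕ} (φ : AForm N) (hφ : φ.WF) (w : Signal N)
    (hw : Sat w φ.toSTL) :
    ∃ ψ ∈ Cls true φ, ∃ θ : Val φ, Sat w (ψ θ) := by
  obtain ⟨θ⟩ := hφ.nonempty_val
  refine ⟨φ.canonicalClass, AForm.canonicalClass_mem true φ, θ, ?_⟩
  rwa [Sat, AForm.robust_canonicalClass hφ]

end STLClass
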